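/- Let d, ℓ, k be positive integers with k ≤ ℓ and 2ℓ > d. Let p : ℝ^d → ℝ be a Schwartz function. Then all the integrals below converge absolutely, and for every x ∈ ℝ^d and every 1 ≤ i ≤ d: Σ_{j=1}^d ∫_{ℝ^d} K^{div}_{ij}(x−t) ∂_j p(t) dt = 0, and consequently Σ_{j=1}^d ∫_{ℝ^d} K^{curl}_{ij}(x−t) ∂_j p(t) dt = ∫_{ℝ^d} ψ̃_{ℓ,k}(x−t) ∂_i p(t) dt, where ψ̃_{ℓ,k} := q_{d,ℓ,k}(Δ̃) Δ φ_{ℓ+1}. -/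

import Mathlib

open MeasureTheory Finset
open scoped BigOperators RealInnerProductSpace SchwartzMap ENNReal

noncomputable section

/-- Euclidean space `ℝ^d`. -/
abbrev Euc (d : ℕ) := EuclideanSpace ℝ (Fin d)

/-- The constant `E_{m,d}`. -/
def Econst (d m : ℕ) : ℝ :=
  Real.Gamma ((d : ℝ) / 2) /
    (2 ^ m * Real.pi ^ ((d : ℝ) / 2) * (Nat.factorial (m - 1)) *
      ∏ j ∈ (Finset.range m).filter (fun j : ℕ => (2 * (m : ℤ) - 2 * j - d) ≠ 0),
        ((2 * m : ℝ) - 2 * j - d))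

open Classical in
/-- The fundamental solution `φ_m` of the iterated Laplacian `Δ^m`:
`φ_m(x) = ‖x‖^(2m−d) (C_{m,d} ln ‖x‖ + D_{m,d})` with `(C,D) = (0,E)` for odd `d`
and `(E,0)` for even `d`. -/
def phi (d m : ℕ) (x : Euc d) : ℝ :=
  if x = 0 then 0
  else ‖x‖ ^ (2 * m - d) *
    ((if Even d then Econst d m else 0) * Real.log ‖x‖ +
     (if Even d then 0 else Econst d m))

/-- Standard basis vector `e_s`. -/
def evec (d : ℕ) (s : Fin d) : Euc d := EuclideanSpace.single s 1

/-- Central difference operator `Δ̃_s` in direction `s`. -/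
def cdiff (d : ℕ) (s : Fin d) (f : Euc d → ℝ) : Euc d → ℝ :=
  fun x => f (x - evec d s) - 2 * f x + f (x + evec d s)

/-- Iterated central difference operator `∏_s Δ̃_s^{β s}`. -/
def cdiffMulti (d : ℕ) (β : Fin d →₀ ℕ) (f : Euc d → ℝ) : Euc d → ℝ :=
  ((List.ofFn fun s : Fin d => (cdiff d s)^[β s]).foldr (· ∘ ·) id) f

/-- The difference operator `q(Δ̃)` associated with a polynomial `q`. -/
def applyCDiff (d : ℕ) (q : MvPolynomial (Fin d) ℝ) (f : Euc d → ℝ) : Euc d → ℝ :=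
  fun x => ∑ β ∈ q.support, q.coeff β * cdiffMulti d β f x

/-- The coefficients `a_i = (−1)^i 2 (i!)² / (2i+2)!`. -/
def acoef (i : ℕ) : ℝ :=
  (-1 : ℝ) ^ i * 2 * (Nat.factorial i) ^ 2 / Nat.factorial (2 * i + 2)

/-- The polynomial `p_{d,ℓ,k} = (Σ_{i<k} a_i Σ_s x_s^{i+1})^ℓ`. -/
def pPoly (d l k : ℕ) : MvPolynomial (Fin d) ℝ :=
  (∑ i ∈ Finset.range k,
    MvPolynomial.C (acoef i) * ∑ s : Fin d, MvPolynomial.X s ^ (i + 1)) ^ l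

/-- `q_{d,ℓ,k}`: the truncation of `p_{d,ℓ,k}` obtained by deleting every monomial
of total degree `≥ ℓ + k`. -/
def qPoly (d l k : ℕ) : MvPolynomial (Fin d) ℝ :=
  ∑ β ∈ (pPoly d l k).support.filter (fun β => (β.sum fun _ n => n) < l + k),
    MvPolynomial.monomial β ((pPoly d l k).coeff β)

/-- The polyharmonic spline `ψ_{ℓ,k} = q_{d,ℓ,k}(Δ̃) φ_ℓ`. -/
def psi (d l k : ℕ) : Euc d → ℝ := applyCDiff d (qPoly d l k) (phi d l)

/-- Partial derivative `∂_s`. -/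
def pderiv' (d : ℕ) (s : Fin d) (f : Euc d → ℝ) : Euc d → ℝ :=
  fun x => fderiv ℝ f x (evec d s)

/-- Iterated partial derivative `D^α` of multi-index order `α`. -/
def pderivMulti (d : ℕ) (α : Fin d →₀ ℕ) (f : Euc d → ℝ) : Euc d → ℝ :=
  ((List.ofFn fun s : Fin d => (pderiv' d s)^[α s]).foldr (· ∘ ·) id) f

/-- The Laplacian `Δ f = Σ_s ∂²f/∂x_s²`. -/
def lap (d : ℕ) (f : Euc d → ℝ) : Euc d → ℝ :=
  fun x => ∑ s : Fin d, pderiv' d s (pderiv' d s f) x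

/-- Total order `|α|` of a multi-index. -/
def mdeg {d : ℕ} (α : Fin d →₀ ℕ) : ℕ := α.sum fun _ n => n

/-- The Fourier transform with normalization `(2π)^{−d/2} ∫ f(x) e^{−i⟨ω,x⟩} dx`. -/
def ftransform (d : ℕ) (f : Euc d → ℂ) (ω : Euc d) : ℂ :=
  ((2 * Real.pi : ℝ) ^ (-(d : ℝ) / 2) : ℝ) *
    ∫ x : Euc d, f x * Complex.exp (-Complex.I * (⟪ω, x⟫ : ℝ))

/-- `g` is the Fourier–Plancherel transform of `f ∈ L²(ℝ^d)`, characterized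
distributionally: `∫ f û = ∫ g u` for every Schwartz function `u`. -/
def HasFT (d : ℕ) (f g : Euc d → ℂ) : Prop :=
  ∀ u : 𝓢(Euc d, ℂ), ∫ x : Euc d, f x * ftransform d (⇑u) x = ∫ x : Euc d, g x * u x

/-- Componentwise Fourier–Plancherel transform of a vector field. -/
def HasFTvec (d : ℕ) (f : Euc d → Euc d) (g : Euc d → Fin d → ℂ) : Prop :=
  ∀ i : Fin d, HasFT d (fun x => ((f x i : ℝ) : ℂ)) (fun ω => g ω i)

/-- Embedding of an integer multi-index `j ∈ ℤ^d` into `ℝ^d`. -/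
def zpt (d : ℕ) (j : Fin d → ℤ) : Euc d := WithLp.toLp 2 (fun s => (j s : ℝ))

/-- A vector field `f ∈ L²(ℝ^d; ℝ^d)` is weakly divergence-free:
`∫ ⟨f(x), ∇u(x)⟩ dx = 0` for every Schwartz function `u`. -/
def WeaklyDivFree (d : ℕ) (f : Euc d → Euc d) : Prop :=
  ∀ u : 𝓢(Euc d, ℝ), ∫ x : Euc d, ∑ i : Fin d, f x i * pderiv' d i (⇑u) x = 0

/-- A vector field `f ∈ L²(ℝ^d; ℝ^d)` is weakly curl-free:
`∫ (f_i ∂_j u − f_j ∂_i u) dx = 0` for all `i, j` and every Schwartz function `u`. -/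
def WeaklyCurlFree (d : ℕ) (f : Euc d → Euc d) : Prop :=
  ∀ u : 𝓢(Euc d, ℝ), ∀ i j : Fin d,
    ∫ x : Euc d, (f x i * pderiv' d j (⇑u) x - f x j * pderiv' d i (⇑u) x) = 0

/-- Entries of the divergence-free matrix kernel
`K^div_{ij} = q_{d,ℓ,k}(Δ̃)(δ_{ij} Δ − ∂_i ∂_j) φ_{ℓ+1}`. -/
def Kdiv (d l k : ℕ) (i j : Fin d) : Euc d → ℝ :=
  applyCDiff d (qPoly d l k)
    (fun x => (if i = j then lap d (phi d (l + 1)) x else 0)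
      - pderiv' d i (pderiv' d j (phi d (l + 1))) x)

/-- Entries of the curl-free matrix kernel `K^curl_{ij} = q_{d,ℓ,k}(Δ̃)(∂_i ∂_j) φ_{ℓ+1}`. -/
def Kcurl (d l k : ℕ) (i j : Fin d) : Euc d → ℝ :=
  applyCDiff d (qPoly d l k) (pderiv' d i (pderiv' d j (phi d (l + 1))))

/-- `ψ̃_{ℓ,k} := q_{d,ℓ,k}(Δ̃) Δ φ_{ℓ+1}`. -/
def psiTilde (d l k : ℕ) : Euc d → ℝ :=
  applyCDiff d (qPoly d l k) (lap d (phi d (l + 1)))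

end

/-!
Write `φ_{ℓ+1}(x) = ‖x‖ⁿ (A log ‖x‖ + B)` with `n = 2ℓ + 2 − d ≥ 3`. Then every `∂ⱼφ` is
`xⱼ ‖x‖ⁿ⁻² (A' log ‖x‖ + B')`, a `C¹` function which, like its first derivatives, grows at most
polynomially, so every kernel below is integrable against a Schwartz function. Two integrations by
parts, with the symmetry `∂ᵢ∂ⱼp = ∂ⱼ∂ᵢp` in between, give
`∑ⱼ ∫ ∂ᵢ∂ⱼφ(x − t) ∂ⱼp(t) dt = ∫ Δφ(x − t) ∂ᵢp(t) dt`, which is both identities for the kernels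
before `q(Δ̃)` is applied. Finally `q(Δ̃)` is a finite linear combination of translations: it is
linear and commutes with convolution against Schwartz functions, which transfers both identities to
`K^div`, `K^curl` and `ψ̃`.
-/

open Real Filter Topology LineDeriv

noncomputable section

namespace PolyharmonicKernel

section Calculus

variable {E F : Type*} [NormedAddCommGroup E] [NormedSpace ℝ E] [NormedAddCommGroup F]
  [NormedSpace ℝ F]

lemma hasFDerivAt_zero_of_norm_le_norm_mul {f : E → F} {g : E → ℝ} (hg : Tendsto g (𝓝 0) (𝓝 0)) (hfg : ∀ h, ‖f h‖ ≤ ‖h‖ * g h) :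
    HasFDerivAt f (0 : E →L[ℝ] F) 0 := by
  have hf0 : f 0 = 0 := by simpa using hfg 0
  rw [hasFDerivAt_iff_isLittleO_nhds_zero]
  simp only [zero_add, hf0, sub_zero, zero_apply]
  refine Asymptotics.isLittleO_iff.mpr fun c hc => ?_
  filter_upwards [hg (Iio_mem_nhds hc)] with h hh
  calc ‖f h‖ ≤ ‖h‖ * g h := hfg h
    _ ≤ ‖h‖ * c := mul_le_mul_of_nonneg_left (le_of_lt hh) (norm_nonneg h)
    _ = c * ‖h‖ := mul_comm _ _

lemma fderiv_fderiv_apply_comm {f : E → F} (hf : ContDiff ℝ 2 f) (x v w : E) :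
    fderiv ℝ (fun y => fderiv ℝ f y w) x v = fderiv ℝ (fun y => fderiv ℝ f y v) x w := by
  have hdf : Differentiable ℝ (fderiv ℝ f) :=
    (hf.fderiv_right (m := 1) le_rfl).differentiable one_ne_zero
  have happly : ∀ u, fderiv ℝ (fun y => fderiv ℝ f y u) x = (fderiv ℝ (fderiv ℝ f) x).flip u :=
    fun u => by simp [fderiv_clm_apply (hdf x) (differentiableAt_const u)]
  rw [happly, happly, ContinuousLinearMap.flip_apply, ContinuousLinearMap.flip_apply]
  exact (hf.contDiffAt.isSymmSndFDerivAt (by simp)).eq v w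

end Calculus

lemma abs_pow_mul_log_le {r : ℝ} (hr : 0 ≤ r) {m : ℕ} (hm : m ≠ 0) :
    |r ^ m * log r| ≤ (1 + r) ^ (m + 1) := by
  obtain ⟨n, rfl⟩ := Nat.exists_eq_succ_of_ne_zero hm
  have h1 : (1 : ℝ) ≤ (1 + r) ^ (n + 1 + 1) := one_le_pow₀ (by linarith)
  rcases hr.eq_or_lt with rfl | hr
  · simp
  rcases le_or_gt r 1 with hr1 | hr1
  · calc |r ^ (n + 1) * log r| = r ^ n * |log r * r| := by
          rw [pow_succ, abs_mul, abs_mul, abs_mul, abs_of_pos hr, abs_of_pos (by positivity)]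
          ring
      _ ≤ 1 * 1 := mul_le_mul (pow_le_one₀ hr.le hr1) (abs_log_mul_self_lt r hr hr1).le
          (abs_nonneg _) zero_le_one
      _ ≤ _ := by simpa using h1
  · have hlog : 0 ≤ log r := log_nonneg hr1.le
    have hlog' : log r ≤ 1 + r := by linarith [log_le_sub_one_of_pos hr]
    rw [abs_of_nonneg (by positivity), pow_succ _ (n + 1)]
    exact mul_le_mul (pow_le_pow_left₀ hr.le (by linarith) _) hlog' hlog (by positivity)

section RadialLog

variable {E : Type*} [NormedAddCommGroup E]

def radialLog (a b : ℝ) (m : ℕ) (x : E) : ℝ := ‖x‖ ^ m * (a * log ‖x‖ + b)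

lemma radialLog_zero (a b : ℝ) {m : ℕ} (hm : m ≠ 0) : radialLog a b m (0 : E) = 0 := by
  simp [radialLog, hm]

lemma radialLog_succ (a b : ℝ) (m : ℕ) (x : E) :
    radialLog a b (m + 1) x = ‖x‖ * radialLog a b m x := by
  simp only [radialLog, pow_succ]
  ring

lemma continuous_radialLog (a b : ℝ) {m : ℕ} (hm : m ≠ 0) :
    Continuous (radialLog a b m : E → ℝ) := by
  obtain ⟨n, rfl⟩ := Nat.exists_eq_succ_of_ne_zero hm
  have h : (radialLog a b (n + 1) : E → ℝ)
      = fun x => ‖x‖ ^ n * (a * (‖x‖ * log ‖x‖) + b * ‖x‖) := by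
    funext x
    simp only [radialLog, pow_succ]
    ring
  rw [h]
  have := continuous_mul_log.comp (continuous_norm (E := E))
  fun_prop

lemma abs_radialLog_le (a b : ℝ) {m : ℕ} (hm : m ≠ 0) (x : E) :
    |radialLog a b m x| ≤ (|a| + |b|) * (1 + ‖x‖) ^ (m + 1) := by
  have hpow : ‖x‖ ^ m ≤ (1 + ‖x‖) ^ (m + 1) :=
    calc ‖x‖ ^ m ≤ (1 + ‖x‖) ^ m := pow_le_pow_left₀ (norm_nonneg x) (by linarith) m
      _ ≤ (1 + ‖x‖) ^ (m + 1) := pow_le_pow_right₀ (by linarith [norm_nonneg x]) m.le_succ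
  calc |radialLog a b m x| = |a * (‖x‖ ^ m * log ‖x‖) + b * ‖x‖ ^ m| := by
        rw [radialLog]
        ring_nf
    _ ≤ |a| * |‖x‖ ^ m * log ‖x‖| + |b| * ‖x‖ ^ m := by
        refine (abs_add_le _ _).trans_eq ?_
        simp only [abs_mul, abs_of_nonneg (pow_nonneg (norm_nonneg x) m)]
    _ ≤ |a| * (1 + ‖x‖) ^ (m + 1) + |b| * (1 + ‖x‖) ^ (m + 1) := by
        gcongr
        exact abs_pow_mul_log_le (norm_nonneg x) hm
    _ = (|a| + |b|) * (1 + ‖x‖) ^ (m + 1) := by ring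

lemma tendsto_abs_radialLog_zero (a b : ℝ) {m : ℕ} (hm : m ≠ 0) :
    Tendsto (fun x : E => |radialLog a b m x|) (𝓝 0) (𝓝 0) := by
  simpa [radialLog_zero a b hm] using
    ((continuous_radialLog a b hm).abs.tendsto (0 : E))

variable [InnerProductSpace ℝ E]

lemma hasFDerivAt_norm_of_ne {x : E} (hx : x ≠ 0) :
    HasFDerivAt (fun y : E => ‖y‖) (‖x‖⁻¹ • innerSL ℝ x) x := by
  have hx' : ‖x‖ ^ 2 ≠ 0 := by positivity
  convert (hasStrictFDerivAt_norm_sq x).hasFDerivAt.sqrt hx' using 1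
  · simp [sqrt_sq (norm_nonneg _)]
  · ext v
    simp [sqrt_sq (norm_nonneg _)]
    field_simp

/-- `‖x‖⁻¹ (d/dr)(rᵐ (a log r + b))|_{r = ‖x‖} • ⟪x, ·⟫`. At `x = 0` the junk value `0⁻¹ = 0`
makes it the zero map, which is the derivative there when `m ≥ 2`. -/
def radialLogDeriv (a b : ℝ) (m : ℕ) (x : E) : E →L[ℝ] ℝ :=
  (‖x‖⁻¹ * radialLog (m * a) (m * b + a) (m - 1) x) • innerSL ℝ x

lemma hasFDerivAt_radialLog_of_ne (a b : ℝ) {m : ℕ} (hm : m ≠ 0) {x : E} (hx : x ≠ 0) :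
    HasFDerivAt (radialLog a b m) (radialLogDeriv a b m x) x := by
  obtain ⟨n, rfl⟩ := Nat.exists_eq_succ_of_ne_zero hm
  have hr : 0 < ‖x‖ := norm_pos_iff.mpr hx
  have hprofile := (hasDerivAt_pow (n + 1) ‖x‖).mul
    (((hasDerivAt_log hr.ne').const_mul a).add_const b)
  refine (hprofile.comp_hasFDerivAt x (hasFDerivAt_norm_of_ne hx)).congr_fderiv ?_
  rw [radialLogDeriv, smul_smul, radialLog, Nat.add_sub_cancel, pow_succ]
  congr 1
  field_simp
  push_cast
  ring

lemma hasFDerivAt_radialLog (a b : ℝ) {m : ℕ} (hm : 2 ≤ m) (x : E) :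
    HasFDerivAt (radialLog a b m) (radialLogDeriv a b m x) x := by
  rcases eq_or_ne x 0 with rfl | hx
  · obtain ⟨n, rfl⟩ : ∃ n, m = n + 1 := ⟨m - 1, by omega⟩
    rw [show radialLogDeriv a b (n + 1) (0 : E) = 0 by simp [radialLogDeriv]]
    refine hasFDerivAt_zero_of_norm_le_norm_mul
      (tendsto_abs_radialLog_zero a b (by omega : n ≠ 0)) fun h => ?_
    rw [radialLog_succ, norm_mul, norm_norm, Real.norm_eq_abs]
  · exact hasFDerivAt_radialLog_of_ne a b (by omega) hx

lemma norm_radialLogDeriv_le (a b : ℝ) (m : ℕ) (x : E) :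
    ‖radialLogDeriv a b m x‖ ≤ |radialLog (m * a) (m * b + a) (m - 1) x| := by
  rw [radialLogDeriv, norm_smul, innerSL_apply_norm, Real.norm_eq_abs, abs_mul, abs_inv,
    abs_norm, mul_right_comm]
  rcases eq_or_ne x 0 with rfl | hx
  · simp
  · rw [inv_mul_cancel₀ (norm_ne_zero_iff.mpr hx), one_mul]

def innerRadialLog (u : E) (a b : ℝ) (m : ℕ) (x : E) : ℝ := ⟪u, x⟫ * radialLog a b m x

def innerRadialLogDeriv (u : E) (a b : ℝ) (m : ℕ) (x : E) : E →L[ℝ] ℝ :=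
  ⟪u, x⟫ • radialLogDeriv a b m x + radialLog a b m x • innerSL ℝ u

lemma hasFDerivAt_innerRadialLog (u : E) (a b : ℝ) {m : ℕ} (hm : m ≠ 0) (x : E) :
    HasFDerivAt (innerRadialLog u a b m) (innerRadialLogDeriv u a b m x) x := by
  rcases eq_or_ne x 0 with rfl | hx
  · rw [show innerRadialLogDeriv u a b m (0 : E) = 0 by
      simp [innerRadialLogDeriv, radialLog_zero a b hm]]
    refine hasFDerivAt_zero_of_norm_le_norm_mul
      (by simpa using (tendsto_abs_radialLog_zero a b hm).const_mul ‖u‖) fun h => ?_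
    rw [innerRadialLog, norm_mul, Real.norm_eq_abs, Real.norm_eq_abs, ← mul_assoc, mul_comm ‖h‖]
    gcongr
    exact abs_real_inner_le_norm u h
  · exact (innerSL ℝ u).hasFDerivAt.mul (hasFDerivAt_radialLog_of_ne a b hm hx)

lemma differentiable_innerRadialLog (u : E) (a b : ℝ) {m : ℕ} (hm : m ≠ 0) :
    Differentiable ℝ (innerRadialLog u a b m) :=
  fun x => (hasFDerivAt_innerRadialLog u a b hm x).differentiableAt

lemma norm_innerRadialLogDeriv_le (u : E) (a b : ℝ) {m : ℕ} (hm : m ≠ 0) (x : E) :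
    ‖innerRadialLogDeriv u a b m x‖
      ≤ ‖u‖ * (|radialLog (m * a) (m * b + a) m x| + |radialLog a b m x|) := by
  obtain ⟨n, rfl⟩ := Nat.exists_eq_succ_of_ne_zero hm
  refine (norm_add_le _ _).trans ?_
  rw [norm_smul, norm_smul, innerSL_apply_norm, Real.norm_eq_abs, Real.norm_eq_abs]
  have hu := abs_real_inner_le_norm u x
  have hD := norm_radialLogDeriv_le a b (n + 1) x
  rw [Nat.add_sub_cancel] at hD
  calc |⟪u, x⟫| * ‖radialLogDeriv a b (n + 1) x‖ + |radialLog a b (n + 1) x| * ‖u‖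
      ≤ (‖u‖ * ‖x‖) * |radialLog (↑(n + 1) * a) (↑(n + 1) * b + a) n x|
        + |radialLog a b (n + 1) x| * ‖u‖ := by
        gcongr
    _ = _ := by
        rw [radialLog_succ (((n + 1 : ℕ) : ℝ) * a), abs_mul, abs_norm]
        ring

end RadialLog

section PolyBounded

variable {E : Type*} [NormedAddCommGroup E]

lemma pow_one_add_norm_le_mul {x y z : E} (h : ‖z‖ ≤ ‖x‖ + ‖y‖) (N : ℕ) :
    (1 + ‖z‖) ^ N ≤ (1 + ‖x‖) ^ N * (1 + ‖y‖) ^ N := by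
  rw [← mul_pow]
  have := norm_nonneg x
  have := norm_nonneg y
  exact pow_le_pow_left₀ (by positivity) (by nlinarith) N

variable [MeasurableSpace E]

def PolyBounded (g : E → ℝ) : Prop :=
  Measurable g ∧ ∃ C N, 0 ≤ C ∧ ∀ x, |g x| ≤ C * (1 + ‖x‖) ^ N

lemma PolyBounded.of_abs_le {f g : E → ℝ} (hf : Measurable f) (hg : PolyBounded g)
    (hfg : ∀ x, |f x| ≤ g x) : PolyBounded f := by
  obtain ⟨-, C, N, hC, hb⟩ := hg
  exact ⟨hf, C, N, hC, fun x => (hfg x).trans ((le_abs_self _).trans (hb x))⟩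

lemma polyBounded_norm [OpensMeasurableSpace E] : PolyBounded (fun x : E => ‖x‖) :=
  ⟨continuous_norm.measurable, 1, 1, zero_le_one, fun x => by simp⟩

lemma PolyBounded.abs {g : E → ℝ} (hg : PolyBounded g) : PolyBounded (fun x => |g x|) := by
  obtain ⟨hm, C, N, hC, hb⟩ := hg
  exact ⟨hm.abs, C, N, hC, fun x => by simpa using hb x⟩

lemma PolyBounded.const_mul {g : E → ℝ} (hg : PolyBounded g) (c : ℝ) :
    PolyBounded (fun x => c * g x) := by
  obtain ⟨hm, C, N, hC, hb⟩ := hg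
  refine ⟨hm.const_mul c, |c| * C, N, by positivity, fun x => ?_⟩
  rw [abs_mul, mul_assoc]
  exact mul_le_mul_of_nonneg_left (hb x) (abs_nonneg c)

lemma PolyBounded.add {g₁ g₂ : E → ℝ} (h₁ : PolyBounded g₁) (h₂ : PolyBounded g₂) :
    PolyBounded (fun x => g₁ x + g₂ x) := by
  obtain ⟨hm₁, C₁, N₁, hC₁, hb₁⟩ := h₁
  obtain ⟨hm₂, C₂, N₂, hC₂, hb₂⟩ := h₂
  refine ⟨hm₁.add hm₂, C₁ + C₂, N₁ + N₂, by positivity, fun x => ?_⟩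
  have h1 : (1 : ℝ) ≤ 1 + ‖x‖ := by linarith [norm_nonneg x]
  calc |g₁ x + g₂ x| ≤ C₁ * (1 + ‖x‖) ^ N₁ + C₂ * (1 + ‖x‖) ^ N₂ :=
        (abs_add_le _ _).trans (add_le_add (hb₁ x) (hb₂ x))
    _ ≤ C₁ * (1 + ‖x‖) ^ (N₁ + N₂) + C₂ * (1 + ‖x‖) ^ (N₁ + N₂) := by
        gcongr <;> first | exact h1 | omega
    _ = (C₁ + C₂) * (1 + ‖x‖) ^ (N₁ + N₂) := by ring

lemma PolyBounded.mul {g₁ g₂ : E → ℝ} (h₁ : PolyBounded g₁) (h₂ : PolyBounded g₂) :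
    PolyBounded (fun x => g₁ x * g₂ x) := by
  obtain ⟨hm₁, C₁, N₁, hC₁, hb₁⟩ := h₁
  obtain ⟨hm₂, C₂, N₂, hC₂, hb₂⟩ := h₂
  refine ⟨hm₁.mul hm₂, C₁ * C₂, N₁ + N₂, by positivity, fun x => ?_⟩
  rw [abs_mul, pow_add]
  calc |g₁ x| * |g₂ x| ≤ (C₁ * (1 + ‖x‖) ^ N₁) * (C₂ * (1 + ‖x‖) ^ N₂) :=
        mul_le_mul (hb₁ x) (hb₂ x) (abs_nonneg _) (by positivity)
    _ = _ := by ring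

lemma PolyBounded.sub {g₁ g₂ : E → ℝ} (h₁ : PolyBounded g₁) (h₂ : PolyBounded g₂) :
    PolyBounded (fun x => g₁ x - g₂ x) := by
  simpa [sub_eq_add_neg] using h₁.add (h₂.const_mul (-1))

lemma polyBounded_zero : PolyBounded (fun _ : E => (0 : ℝ)) :=
  ⟨measurable_const, 0, 0, le_rfl, fun x => by simp⟩

lemma PolyBounded.finset_sum {ι : Type*} (s : Finset ι) {F : ι → E → ℝ}
    (h : ∀ i ∈ s, PolyBounded (F i)) : PolyBounded (fun x => ∑ i ∈ s, F i x) := by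
  classical
  induction s using Finset.induction_on with
  | empty => simpa using polyBounded_zero
  | insert a s ha ih =>
    simp only [Finset.sum_insert ha]
    exact (h a (Finset.mem_insert_self a s)).add (ih fun i hi => h i (Finset.mem_insert_of_mem hi))

variable [BorelSpace E]

lemma PolyBounded.comp_add_const {g : E → ℝ} (hg : PolyBounded g) (v : E) :
    PolyBounded (fun x => g (x + v)) := by
  obtain ⟨hm, C, N, hC, hb⟩ := hg
  refine ⟨hm.comp (continuous_add_const v).measurable, C * (1 + ‖v‖) ^ N, N, by positivity,
    fun x => (hb _).trans ?_⟩
  rw [mul_assoc, mul_comm ((1 + ‖v‖) ^ N)]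
  exact mul_le_mul_of_nonneg_left (pow_one_add_norm_le_mul (norm_add_le x v) N) hC

lemma PolyBounded.comp_const_sub {g : E → ℝ} (hg : PolyBounded g) (y : E) :
    PolyBounded (fun t => g (y - t)) := by
  obtain ⟨hm, C, N, hC, hb⟩ := hg
  refine ⟨hm.comp (continuous_sub_left y).measurable, C * (1 + ‖y‖) ^ N, N, by positivity,
    fun t => (hb _).trans ?_⟩
  rw [mul_assoc]
  exact mul_le_mul_of_nonneg_left (pow_one_add_norm_le_mul (norm_sub_le y t) N) hC

variable [NormedSpace ℝ E] [SecondCountableTopology E] (μ : Measure E) [μ.HasTemperateGrowth]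

lemma PolyBounded.integrable_mul_schwartz {g : E → ℝ} (hg : PolyBounded g) (w : 𝓢(E, ℝ)) :
    Integrable (fun t => g t * w t) μ := by
  obtain ⟨hm, C, N, hC, hb⟩ := hg
  have hdecay : Integrable (fun t => (1 + ‖t‖) ^ N * ‖w t‖) μ := by
    simp_rw [add_comm (1 : ℝ), add_pow, one_pow, mul_one, Finset.sum_mul]
    exact integrable_finsetSum _ fun n _ =>
      ((w.integrable_pow_mul μ n).const_mul (N.choose n : ℝ)).congr
        (Eventually.of_forall fun t => by ring)
  refine (hdecay.const_mul C).mono' (hm.mul w.continuous.measurable).aestronglyMeasurable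
    (Eventually.of_forall fun t => ?_)
  rw [norm_mul, ← mul_assoc]
  exact mul_le_mul_of_nonneg_right (hb t) (norm_nonneg _)

lemma PolyBounded.integrable_comp_sub_mul {g : E → ℝ} (hg : PolyBounded g) (w : 𝓢(E, ℝ))
    (y : E) : Integrable (fun t => g (y - t) * w t) μ :=
  (hg.comp_const_sub y).integrable_mul_schwartz μ w

end PolyBounded

section RadialLogGrowth

variable {E : Type*} [NormedAddCommGroup E] [MeasurableSpace E] [BorelSpace E]

lemma polyBounded_radialLog (a b : ℝ) {m : ℕ} (hm : m ≠ 0) :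
    PolyBounded (radialLog a b m : E → ℝ) :=
  ⟨(continuous_radialLog a b hm).measurable, |a| + |b|, m + 1, by positivity,
    abs_radialLog_le a b hm⟩

variable [InnerProductSpace ℝ E]

lemma polyBounded_inner (u : E) : PolyBounded (fun x : E => ⟪u, x⟫) :=
  (polyBounded_norm.const_mul ‖u‖).of_abs_le (continuous_const.inner continuous_id).measurable
    fun x => abs_real_inner_le_norm u x

lemma polyBounded_innerRadialLog (u : E) (a b : ℝ) {m : ℕ} (hm : m ≠ 0) :
    PolyBounded (innerRadialLog u a b m) :=
  (polyBounded_inner u).mul (polyBounded_radialLog a b hm)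

lemma polyBounded_fderiv_innerRadialLog_apply (u : E) (a b : ℝ) {m : ℕ} (hm : m ≠ 0) (v : E) :
    PolyBounded fun x => fderiv ℝ (innerRadialLog u a b m) x v := by
  have hbound := (((polyBounded_radialLog (E := E) (m * a) (m * b + a) hm).abs.add
    (polyBounded_radialLog a b hm).abs).const_mul ‖u‖).const_mul ‖v‖
  refine PolyBounded.of_abs_le (measurable_fderiv_apply_const ℝ _ v) hbound fun x => ?_
  rw [(hasFDerivAt_innerRadialLog u a b hm x).fderiv, ← Real.norm_eq_abs, mul_comm ‖v‖]
  exact ((innerRadialLogDeriv u a b m x).le_opNorm v).trans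
    (mul_le_mul_of_nonneg_right (norm_innerRadialLogDeriv_le u a b hm x) (norm_nonneg v))

end RadialLogGrowth

section ShiftCombination

variable {E : Type*} [AddCommGroup E]

def IsShiftCombination (O : (E → ℝ) → E → ℝ) : Prop :=
  ∃ (ι : Type) (_ : Fintype ι) (c : ι → ℝ) (v : ι → E), ∀ g x, O g x = ∑ i, c i * g (x + v i)

namespace IsShiftCombination

lemma id : IsShiftCombination (id : (E → ℝ) → E → ℝ) :=
  ⟨Unit, inferInstance, fun _ => 1, fun _ => 0, fun g x => by simp⟩

lemma comp {O₁ O₂ : (E → ℝ) → E → ℝ} (h₁ : IsShiftCombination O₁)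
    (h₂ : IsShiftCombination O₂) : IsShiftCombination (O₁ ∘ O₂) := by
  obtain ⟨ι₁, _, c₁, v₁, he₁⟩ := h₁
  obtain ⟨ι₂, _, c₂, v₂, he₂⟩ := h₂
  refine ⟨ι₁ × ι₂, inferInstance, fun p => c₁ p.1 * c₂ p.2, fun p => v₁ p.1 + v₂ p.2,
    fun g x => ?_⟩
  simp only [Function.comp_apply, he₁, he₂, Fintype.sum_prod_type, Finset.mul_sum, add_assoc,
    mul_assoc]

lemma iterate {O : (E → ℝ) → E → ℝ} (h : IsShiftCombination O) (n : ℕ) :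
    IsShiftCombination O^[n] := by
  induction n with
  | zero => exact id
  | succ n ih => exact Function.iterate_succ O n ▸ ih.comp h

lemma list_foldr_comp {L : List ((E → ℝ) → E → ℝ)} (h : ∀ O ∈ L, IsShiftCombination O) :
    IsShiftCombination (L.foldr (· ∘ ·) _root_.id) := by
  induction L with
  | nil => exact id
  | cons O L ih =>
    exact (h O List.mem_cons_self).comp (ih fun O' hO' => h O' (List.mem_cons_of_mem O hO'))

lemma zero : IsShiftCombination (fun (_ : E → ℝ) (_ : E) => (0 : ℝ)) :=
  ⟨Empty, inferInstance, Empty.elim, Empty.elim, fun g x => by simp⟩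

lemma add {O₁ O₂ : (E → ℝ) → E → ℝ} (h₁ : IsShiftCombination O₁)
    (h₂ : IsShiftCombination O₂) : IsShiftCombination (fun g x => O₁ g x + O₂ g x) := by
  obtain ⟨ι₁, _, c₁, v₁, he₁⟩ := h₁
  obtain ⟨ι₂, _, c₂, v₂, he₂⟩ := h₂
  exact ⟨ι₁ ⊕ ι₂, inferInstance, Sum.elim c₁ c₂, Sum.elim v₁ v₂, fun g x => by
    simp [he₁, he₂, Fintype.sum_sum_type]⟩

lemma const_mul {O : (E → ℝ) → E → ℝ} (h : IsShiftCombination O) (a : ℝ) :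
    IsShiftCombination (fun g x => a * O g x) := by
  obtain ⟨ι, _, c, v, he⟩ := h
  exact ⟨ι, inferInstance, fun i => a * c i, v, fun g x => by simp [he, Finset.mul_sum, mul_assoc]⟩

lemma finset_sum {κ : Type*} (s : Finset κ) (a : κ → ℝ) {O : κ → (E → ℝ) → E → ℝ}
    (h : ∀ k ∈ s, IsShiftCombination (O k)) :
    IsShiftCombination (fun g x => ∑ k ∈ s, a k * O k g x) := by
  classical
  induction s using Finset.induction_on with
  | empty => simpa using zero
  | insert k s hk ih =>
    simp only [Finset.sum_insert hk]
    exact ((h k (Finset.mem_insert_self k s)).const_mul (a k)).add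
      (ih fun k' hk' => h k' (Finset.mem_insert_of_mem hk'))

variable {O : (E → ℝ) → E → ℝ}

lemma map_zero (h : IsShiftCombination O) : O 0 = 0 := by
  obtain ⟨ι, _, c, v, he⟩ := h
  funext x
  simp [he]

lemma map_sum (h : IsShiftCombination O) {κ : Type*} (s : Finset κ) (F : κ → E → ℝ) :
    O (∑ k ∈ s, F k) = ∑ k ∈ s, O (F k) := by
  obtain ⟨ι, _, c, v, he⟩ := h
  funext x
  simp only [he, Finset.sum_apply, Finset.mul_sum]
  exact Finset.sum_comm

end IsShiftCombination

end ShiftCombination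

section ShiftCombinationConvolution

variable {E : Type*} [NormedAddCommGroup E] [MeasurableSpace E] [BorelSpace E]
  {O : (E → ℝ) → E → ℝ}

lemma IsShiftCombination.polyBounded (hO : IsShiftCombination O) {g : E → ℝ}
    (hg : PolyBounded g) : PolyBounded (O g) := by
  obtain ⟨ι, _, c, v, he⟩ := hO
  rw [show O g = fun x => ∑ i ∈ Finset.univ, c i * g (x + v i) from funext (he g)]
  exact PolyBounded.finset_sum _ fun i _ => (hg.comp_add_const (v i)).const_mul (c i)

variable [NormedSpace ℝ E] [SecondCountableTopology E] (μ : Measure E) [μ.HasTemperateGrowth]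

lemma IsShiftCombination.integral_comp_sub_mul (hO : IsShiftCombination O) {g : E → ℝ}
    (hg : PolyBounded g) (w : 𝓢(E, ℝ)) (y : E) :
    ∫ t, O g (y - t) * w t ∂μ = O (fun z => ∫ t, g (z - t) * w t ∂μ) y := by
  obtain ⟨ι, _, c, v, he⟩ := hO
  have hsum : ∀ t, O g (y - t) * w t = ∑ i, c i * (g (y + v i - t) * w t) := fun t => by
    simp only [he, Finset.sum_mul, sub_add_eq_add_sub, mul_assoc]
  simp_rw [hsum, he]
  rw [integral_finsetSum _ fun i _ => (hg.integrable_comp_sub_mul μ w _).const_mul _]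
  simp_rw [integral_const_mul]

lemma IsShiftCombination.sum_integral_comp_sub_mul (hO : IsShiftCombination O) {ι : Type*}
    (s : Finset ι) {g : ι → E → ℝ} (hg : ∀ j ∈ s, PolyBounded (g j)) (w : ι → 𝓢(E, ℝ))
    (y : E) :
    ∑ j ∈ s, ∫ t, O (g j) (y - t) * w j t ∂μ
      = O (fun z => ∑ j ∈ s, ∫ t, g j (z - t) * w j t ∂μ) y := by
  rw [show (fun z => ∑ j ∈ s, ∫ t, g j (z - t) * w j t ∂μ)
      = ∑ j ∈ s, fun z => ∫ t, g j (z - t) * w j t ∂μ by ext; simp [Finset.sum_apply],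
    hO.map_sum, Finset.sum_apply]
  exact Finset.sum_congr rfl fun j hj => hO.integral_comp_sub_mul μ (hg j hj) (w j) y

end ShiftCombinationConvolution

section IntegrationByParts

variable {E : Type*} [NormedAddCommGroup E] [NormedSpace ℝ E] [FiniteDimensional ℝ E]
  [MeasurableSpace E] [BorelSpace E] (μ : Measure E) [μ.IsAddHaarMeasure]

lemma integral_fderiv_comp_sub_mul {G : E → ℝ} (hG : Differentiable ℝ G) (hGb : PolyBounded G)
    {v : E} (hdG : PolyBounded fun x => fderiv ℝ G x v) (w : 𝓢(E, ℝ)) (y : E) :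
    ∫ t, fderiv ℝ G (y - t) v * w t ∂μ = ∫ t, G (y - t) * fderiv ℝ w t v ∂μ := by
  have hderiv : ∀ t, fderiv ℝ (fun t => G (y - t)) t v = -fderiv ℝ G (y - t) v := fun t => by
    have h := (hG (y - t)).hasFDerivAt.comp t ((hasFDerivAt_id t).const_sub y)
    rw [Function.comp_def] at h
    simp [h.fderiv]
  have hw' : ∀ t, fderiv ℝ w t v = (∂_{v} w : 𝓢(E, ℝ)) t :=
    fun t => (SchwartzMap.lineDerivOp_apply_eq_fderiv v w t).symm
  rw [integral_mul_fderiv_eq_neg_fderiv_mul_of_integrable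
    ((hdG.integrable_comp_sub_mul μ w y).neg.congr (Eventually.of_forall fun t => by
      simp [hderiv]))
    (by simpa only [hw'] using hGb.integrable_comp_sub_mul μ (∂_{v} w) y)
    (hGb.integrable_comp_sub_mul μ w y)
    (fun t _ => (hG _).comp t (differentiableAt_id.const_sub y))
    (fun t _ => w.differentiableAt), ← integral_neg]
  simp [hderiv]

end IntegrationByParts

section Euclidean

variable {d : ℕ}

lemma isShiftCombination_cdiff (s : Fin d) : IsShiftCombination (cdiff d s) :=
  ⟨Fin 3, inferInstance, ![1, -2, 1], ![-evec d s, 0, evec d s], fun g x => by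
    simp [cdiff, Fin.sum_univ_three, sub_eq_add_neg]⟩

lemma isShiftCombination_cdiffMulti (β : Fin d →₀ ℕ) : IsShiftCombination (cdiffMulti d β) :=
  IsShiftCombination.list_foldr_comp fun O hO => by
    obtain ⟨s, rfl⟩ := List.mem_ofFn.mp hO
    exact (isShiftCombination_cdiff s).iterate (β s)

lemma isShiftCombination_applyCDiff (q : MvPolynomial (Fin d) ℝ) :
    IsShiftCombination (applyCDiff d q) :=
  IsShiftCombination.finset_sum _ _ fun β _ => isShiftCombination_cdiffMulti β

lemma phi_eq_radialLog {m : ℕ} (hm : d < 2 * m) :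
    phi d m = radialLog (if Even d then Econst d m else 0) (if Even d then 0 else Econst d m)
      (2 * m - d) := by
  funext x
  rcases eq_or_ne x 0 with rfl | hx
  · simp [phi, radialLog_zero _ _ (by omega : 2 * m - d ≠ 0)]
  · simp [phi, hx, radialLog]

lemma exists_pderiv_phi_eq_innerRadialLog {m : ℕ} (hm : d + 2 ≤ 2 * m) (j : Fin d) :
    ∃ a b : ℝ, pderiv' d j (phi d m) = innerRadialLog (evec d j) a b (2 * m - d - 2) := by
  set A := if Even d then Econst d m else 0
  set B := if Even d then 0 else Econst d m
  set n := 2 * m - d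
  refine ⟨n * A, n * B + A, funext fun x => ?_⟩
  rw [pderiv', phi_eq_radialLog (by omega), (hasFDerivAt_radialLog A B (by omega) x).fderiv,
    radialLogDeriv, innerRadialLog, show n - 1 = n - 2 + 1 by omega, radialLog_succ]
  rcases eq_or_ne x 0 with rfl | hx
  · simp
  · simp [evec, real_inner_comm, norm_ne_zero_iff.mpr hx]
    exact mul_comm _ _

variable {l : ℕ}

lemma differentiable_pderiv_phi (h2l : d < 2 * l) (j : Fin d) :
    Differentiable ℝ (pderiv' d j (phi d (l + 1))) := by
  obtain ⟨a, b, hab⟩ := exists_pderiv_phi_eq_innerRadialLog (m := l + 1) (by omega) j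
  exact hab ▸ differentiable_innerRadialLog _ a b (by omega)

lemma polyBounded_pderiv_phi (h2l : d < 2 * l) (j : Fin d) :
    PolyBounded (pderiv' d j (phi d (l + 1))) := by
  obtain ⟨a, b, hab⟩ := exists_pderiv_phi_eq_innerRadialLog (m := l + 1) (by omega) j
  exact hab ▸ polyBounded_innerRadialLog _ a b (by omega)

lemma polyBounded_pderiv_pderiv_phi (h2l : d < 2 * l) (i j : Fin d) :
    PolyBounded (pderiv' d i (pderiv' d j (phi d (l + 1)))) := by
  obtain ⟨a, b, hab⟩ := exists_pderiv_phi_eq_innerRadialLog (m := l + 1) (by omega) j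
  exact hab ▸ polyBounded_fderiv_innerRadialLog_apply _ a b (by omega) (evec d i)

lemma polyBounded_lap_phi (h2l : d < 2 * l) : PolyBounded (lap d (phi d (l + 1))) :=
  PolyBounded.finset_sum _ fun s _ => polyBounded_pderiv_pderiv_phi h2l s s

lemma polyBounded_divFreeKernel_phi (h2l : d < 2 * l) (i j : Fin d) :
    PolyBounded fun x => (if i = j then lap d (phi d (l + 1)) x else 0)
      - pderiv' d i (pderiv' d j (phi d (l + 1))) x := by
  refine PolyBounded.sub ?_ (polyBounded_pderiv_pderiv_phi h2l i j)
  split_ifs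
  exacts [polyBounded_lap_phi h2l, polyBounded_zero]

lemma pderiv'_eq_lineDerivOp (p : 𝓢(Euc d, ℝ)) (j : Fin d) :
    pderiv' d j p = ⇑(∂_{evec d j} p : 𝓢(Euc d, ℝ)) :=
  funext fun _ => (SchwartzMap.lineDerivOp_apply_eq_fderiv _ _ _).symm

theorem sum_integral_pderiv_pderiv_mul_pderiv {φ : Euc d → ℝ}
    (hdiff : ∀ j, Differentiable ℝ (pderiv' d j φ)) (hG : ∀ j, PolyBounded (pderiv' d j φ))
    (hH : ∀ i j, PolyBounded (pderiv' d i (pderiv' d j φ))) (p : 𝓢(Euc d, ℝ)) (i : Fin d)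
    (y : Euc d) :
    ∑ j, ∫ t, pderiv' d i (pderiv' d j φ) (y - t) * pderiv' d j p t
      = ∫ t, lap d φ (y - t) * pderiv' d i p t := by
  have hibp : ∀ s j (w : 𝓢(Euc d, ℝ)), ∫ t, pderiv' d s (pderiv' d j φ) (y - t) * w t
      = ∫ t, pderiv' d j φ (y - t) * pderiv' d s w t :=
    fun s j w => integral_fderiv_comp_sub_mul volume (hdiff j) (hG j) (hH s j) w y
  have hsymm : ∀ j, pderiv' d i (pderiv' d j p) = pderiv' d j (pderiv' d i p) :=
    fun j => funext fun t => fderiv_fderiv_apply_comm (p.smooth 2) t _ _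
  calc ∑ j, ∫ t, pderiv' d i (pderiv' d j φ) (y - t) * pderiv' d j p t
      = ∑ j, ∫ t, pderiv' d j φ (y - t) * pderiv' d j (pderiv' d i p) t := by
        refine Finset.sum_congr rfl fun j _ => ?_
        rw [pderiv'_eq_lineDerivOp p j, hibp, ← pderiv'_eq_lineDerivOp p j, hsymm]
    _ = ∑ j, ∫ t, pderiv' d j (pderiv' d j φ) (y - t) * pderiv' d i p t := by
        refine Finset.sum_congr rfl fun j _ => ?_
        rw [pderiv'_eq_lineDerivOp p i, hibp]
    _ = ∫ t, lap d φ (y - t) * pderiv' d i p t := by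
        rw [pderiv'_eq_lineDerivOp p i,
          ← integral_finsetSum _ fun j _ => (hH j j).integrable_comp_sub_mul volume _ y]
        simp only [lap, Finset.sum_mul]

theorem sum_integral_divFreeKernel_mul_pderiv {φ : Euc d → ℝ}
    (hdiff : ∀ j, Differentiable ℝ (pderiv' d j φ)) (hG : ∀ j, PolyBounded (pderiv' d j φ))
    (hH : ∀ i j, PolyBounded (pderiv' d i (pderiv' d j φ))) (p : 𝓢(Euc d, ℝ)) (i : Fin d)
    (y : Euc d) :
    ∑ j, ∫ t, ((if i = j then lap d φ (y - t) else 0) - pderiv' d i (pderiv' d j φ) (y - t))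
      * pderiv' d j p t = 0 := by
  have hΔ : PolyBounded (lap d φ) := PolyBounded.finset_sum _ fun s _ => hH s s
  have hint : ∀ j, Integrable fun t => (if i = j then lap d φ (y - t) else 0) * pderiv' d j p t := by
    intro j
    split_ifs
    · exact pderiv'_eq_lineDerivOp p j ▸ hΔ.integrable_comp_sub_mul volume _ y
    · simp
  simp_rw [sub_mul]
  rw [Finset.sum_congr rfl fun j _ => integral_sub (hint j)
    (pderiv'_eq_lineDerivOp p j ▸ (hH i j).integrable_comp_sub_mul volume _ y),
    Finset.sum_sub_distrib, sum_integral_pderiv_pderiv_mul_pderiv hdiff hG hH, sub_eq_zero,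
    Finset.sum_eq_single_of_mem i (Finset.mem_univ i) fun j _ hji => by simp [Ne.symm hji]]
  simp

end Euclidean

end PolyharmonicKernel

end

open PolyharmonicKernel

noncomputable section

theorem statement13_general (d l k : ℕ) (h2l : d < 2 * l)
    (p : 𝓢(Euc d, ℝ)) :
    (∀ i j : Fin d, ∀ x : Euc d,
      Integrable (fun t : Euc d => Kdiv d l k i j (x - t) * pderiv' d j (⇑p) t) volume ∧
      Integrable (fun t : Euc d => Kcurl d l k i j (x - t) * pderiv' d j (⇑p) t) volume ∧
      Integrable (fun t : Euc d => psiTilde d l k (x - t) * pderiv' d i (⇑p) t) volume) ∧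
    (∀ x : Euc d, ∀ i : Fin d,
      ∑ j : Fin d, ∫ t : Euc d, Kdiv d l k i j (x - t) * pderiv' d j (⇑p) t = 0) ∧
    (∀ x : Euc d, ∀ i : Fin d,
      ∑ j : Fin d, ∫ t : Euc d, Kcurl d l k i j (x - t) * pderiv' d j (⇑p) t
        = ∫ t : Euc d, psiTilde d l k (x - t) * pderiv' d i (⇑p) t) := by
  have hO := isShiftCombination_applyCDiff (d := d) (qPoly d l k)
  have hdiff := differentiable_pderiv_phi h2l
  have hG := polyBounded_pderiv_phi h2l
  have hH := polyBounded_pderiv_pderiv_phi h2l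
  have hΔ := polyBounded_lap_phi h2l
  have hdiv := polyBounded_divFreeKernel_phi h2l
  unfold Kdiv Kcurl psiTilde
  refine ⟨fun i j x => ?_, fun x i => ?_, fun x i => ?_⟩
  · simp only [pderiv'_eq_lineDerivOp p]
    exact ⟨(hO.polyBounded (hdiv i j)).integrable_comp_sub_mul volume _ x,
      (hO.polyBounded (hH i j)).integrable_comp_sub_mul volume _ x,
      (hO.polyBounded hΔ).integrable_comp_sub_mul volume _ x⟩
  · have h := hO.sum_integral_comp_sub_mul volume Finset.univ (fun j _ => hdiv i j)
      (fun j => ∂_{evec d j} p) x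
    simp only [← pderiv'_eq_lineDerivOp p] at h
    rw [h]
    simp_rw [sum_integral_divFreeKernel_mul_pderiv hdiff hG hH p i]
    exact congrFun hO.map_zero x
  · have h := hO.sum_integral_comp_sub_mul volume Finset.univ (fun j _ => hH i j)
      (fun j => ∂_{evec d j} p) x
    simp only [← pderiv'_eq_lineDerivOp p] at h
    rw [h]
    simp_rw [sum_integral_pderiv_pderiv_mul_pderiv hdiff hG hH p i]
    rw [pderiv'_eq_lineDerivOp p i]
    exact (hO.integral_comp_sub_mul volume hΔ _ x).symm

/-- For a gradient field `∇p` with `p` Schwartz, convolution with the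
divergence-free kernel annihilates `∇p`, and convolution with the curl-free kernel
reduces to convolution with `ψ̃_{ℓ,k} = q_{d,ℓ,k}(Δ̃) Δ φ_{ℓ+1}`. -/
theorem statement13 (d l k : ℕ) (hd : 0 < d) (hk : 0 < k) (hkl : k ≤ l) (h2l : d < 2 * l)
    (p : 𝓢(Euc d, ℝ)) :
    (∀ i j : Fin d, ∀ x : Euc d,
      Integrable (fun t : Euc d => Kdiv d l k i j (x - t) * pderiv' d j (⇑p) t) volume ∧
      Integrable (fun t : Euc d => Kcurl d l k i j (x - t) * pderiv' d j (⇑p) t) volume ∧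
      Integrable (fun t : Euc d => psiTilde d l k (x - t) * pderiv' d i (⇑p) t) volume) ∧
    (∀ x : Euc d, ∀ i : Fin d,
      ∑ j : Fin d, ∫ t : Euc d, Kdiv d l k i j (x - t) * pderiv' d j (⇑p) t = 0) ∧
    (∀ x : Euc d, ∀ i : Fin d,
      ∑ j : Fin d, ∫ t : Euc d, Kcurl d l k i j (x - t) * pderiv' d j (⇑p) t
        = ∫ t : Euc d, psiTilde d l k (x - t) * pderiv' d i (⇑p) t) :=
  statement13_general d l k h2l p

end
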